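/- arXiv:1810.07421 — 2 statements merged into one kernel-verified Lean document; each statement's English description precedes it below -/
import Mathlib

section
/- Let G be a finite group, H a cyclic subgroup of G containing the center Z of G, and write H̄ = H/Z and Ḡ = G/Z. Then the quotient group N_{Ḡ}(H̄)/C_{Ḡ}(H̄) is isomorphic to a section (a quotient of a subgroup) of N_G(H)/C_G(H). -/
/-! Since `Z ≤ H`, the subgroup `H` is the full preimage of `H̄`, so `g` normalises `H` exactly
when its image normalises `H̄`. Hence `N_G(H)` maps onto `N_Ḡ(H̄)`, carrying `C_G(H)` into
`C_Ḡ(H̄)`, and the induced map `N_G(H)/C_G(H) → N_Ḡ(H̄)/C_Ḡ(H̄)` is onto. -/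

instance centralizer_subgroupOf_normalizer_normal {G : Type*} [Group G] (H : Subgroup G) :
    ((Subgroup.centralizer (H : Set G)).subgroupOf (Subgroup.normalizer (H : Set G))).Normal := by
  rw [← Subgroup.normalizerMonoidHom_ker]
  exact MonoidHom.normal_ker _

namespace Subgroup

variable {G Q : Type*} [Group G] [Group Q]

theorem map_normalizer_eq_of_surjective_of_ker_le {f : G →* Q} {H : Subgroup G}
    (hf : Function.Surjective f) (hker : f.ker ≤ H) :
    (normalizer (H : Set G)).map f = normalizer ((H.map f : Subgroup Q) : Set Q) := by
  rw [← map_comap_eq_self_of_surjective hf (normalizer _), comap_normalizer_eq_of_surjective _ hf,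
    comap_map_eq_self hker]

def normalizerMap (f : G →* Q) (H : Subgroup G) :
    normalizer (H : Set G) →* normalizer ((H.map f : Subgroup Q) : Set Q) :=
  (f.comp (normalizer (H : Set G)).subtype).codRestrict _ fun n =>
    le_normalizer_map f (mem_map_of_mem f n.2)

theorem normalizerMap_surjective {f : G →* Q} {H : Subgroup G}
    (hf : Function.Surjective f) (hker : f.ker ≤ H) :
    Function.Surjective (normalizerMap f H) := by
  rintro ⟨q, hq⟩
  rw [← map_normalizer_eq_of_surjective_of_ker_le hf hker] at hq
  obtain ⟨n, hn, rfl⟩ := hq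
  exact ⟨⟨n, hn⟩, rfl⟩

theorem centralizer_subgroupOf_le_comap_normalizerMap (f : G →* Q) (H : Subgroup G) :
    (centralizer (H : Set G)).subgroupOf (normalizer (H : Set G)) ≤
      ((centralizer ((H.map f : Subgroup Q) : Set Q)).subgroupOf
        (normalizer ((H.map f : Subgroup Q) : Set Q))).comap (normalizerMap f H) := by
  intro n hn
  have := map_centralizer_le_centralizer_image _ f (mem_map_of_mem f hn)
  rw [← coe_map] at this
  exact this

def weylGroupMap (f : G →* Q) (H : Subgroup G) :
    normalizer (H : Set G) ⧸ (centralizer (H : Set G)).subgroupOf (normalizer (H : Set G)) →*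
      normalizer ((H.map f : Subgroup Q) : Set Q) ⧸
        (centralizer ((H.map f : Subgroup Q) : Set Q)).subgroupOf
          (normalizer ((H.map f : Subgroup Q) : Set Q)) :=
  QuotientGroup.map _ _ (normalizerMap f H) (centralizer_subgroupOf_le_comap_normalizerMap f H)

theorem weylGroupMap_surjective {f : G →* Q} {H : Subgroup G}
    (hf : Function.Surjective f) (hker : f.ker ≤ H) :
    Function.Surjective (weylGroupMap f H) :=
  QuotientGroup.map_surjective_of_surjective _ _ _
    ((QuotientGroup.mk'_surjective _).comp (normalizerMap_surjective hf hker)) _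

end Subgroup

theorem quotient_weyl_group_is_section_general {G : Type*} [Group G]
    (H : Subgroup G) (hZ : Subgroup.center G ≤ H) :
    ∃ (K : Subgroup (Subgroup.normalizer (H : Set G) ⧸
        (Subgroup.centralizer (H : Set G)).subgroupOf (Subgroup.normalizer (H : Set G))))
      (f : K →* (Subgroup.normalizer ((H.map (QuotientGroup.mk' (Subgroup.center G))) : Set (G ⧸ Subgroup.center G)) ⧸
        (Subgroup.centralizer ((H.map (QuotientGroup.mk' (Subgroup.center G)) :
            Subgroup (G ⧸ Subgroup.center G)) : Set (G ⧸ Subgroup.center G))).subgroupOf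
          (Subgroup.normalizer ((H.map (QuotientGroup.mk' (Subgroup.center G))) : Set (G ⧸ Subgroup.center G))))),
      Function.Surjective f := by
  have hker : (QuotientGroup.mk' (Subgroup.center G)).ker ≤ H := by rwa [QuotientGroup.ker_mk']
  refine ⟨⊤, (Subgroup.weylGroupMap (QuotientGroup.mk' _) H).comp Subgroup.topEquiv.toMonoidHom, ?_⟩
  exact (Subgroup.weylGroupMap_surjective (QuotientGroup.mk'_surjective _) hker).comp
    Subgroup.topEquiv.surjective

theorem quotient_weyl_group_is_section {G : Type*} [Group G] [Finite G]
    (H : Subgroup G) (hcyc : IsCyclic H) (hZ : Subgroup.center G ≤ H) :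
    ∃ (K : Subgroup (Subgroup.normalizer (H : Set G) ⧸
        (Subgroup.centralizer (H : Set G)).subgroupOf (Subgroup.normalizer (H : Set G))))
      (f : K →* (Subgroup.normalizer ((H.map (QuotientGroup.mk' (Subgroup.center G))) : Set (G ⧸ Subgroup.center G)) ⧸
        (Subgroup.centralizer ((H.map (QuotientGroup.mk' (Subgroup.center G)) :
            Subgroup (G ⧸ Subgroup.center G)) : Set (G ⧸ Subgroup.center G))).subgroupOf
          (Subgroup.normalizer ((H.map (QuotientGroup.mk' (Subgroup.center G))) : Set (G ⧸ Subgroup.center G))))),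
      Function.Surjective f :=
  quotient_weyl_group_is_section_general H hZ
end

section
/- Let m and k ≥ 2 be positive integers and let p be a prime with p > m. The map sending a partition π = (x_1 ≤ x_2 ≤ ... ≤ x_{k−1}) of m into exactly k−1 parts to the partition of n = p + 2m + k² − 1 whose parts are p together with 2(x_i + i) + 1 for 1 ≤ i ≤ k−1, is injective into the set of partitions of n into exactly k distinct odd parts whose product is not a perfect square, provided p is odd, p does not divide any 2(x_i+i)+1, and all parts are distinct from p. -/
theorem partition_construction_injective (m k p : ℕ) (hm : 0 < m) (hk : 2 ≤ k)
    (hp : p.Prime) (hpm : m < p) (hpodd : Odd p)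
    (x y : Fin (k - 1) → ℕ)
    (hxpos : ∀ i, 0 < x i) (hypos : ∀ i, 0 < y i)
    (hxmono : Monotone x) (hymono : Monotone y)
    (hxsum : ∑ i, x i = m) (hysum : ∑ i, y i = m)
    (hxdvd : ∀ i, ¬ p ∣ (2 * (x i + (i : ℕ) + 1) + 1))
    (hydvd : ∀ i, ¬ p ∣ (2 * (y i + (i : ℕ) + 1) + 1))
    (hxne : ∀ i, 2 * (x i + (i : ℕ) + 1) + 1 ≠ p)
    (hyne : ∀ i, 2 * (y i + (i : ℕ) + 1) + 1 ≠ p) :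
    (Multiset.card (p ::ₘ Multiset.map (fun i : Fin (k - 1) =>
        2 * (x i + (i : ℕ) + 1) + 1) Finset.univ.val) = k) ∧
    ((p ::ₘ Multiset.map (fun i : Fin (k - 1) =>
        2 * (x i + (i : ℕ) + 1) + 1) Finset.univ.val).sum = p + 2 * m + k ^ 2 - 1) ∧
    ((p ::ₘ Multiset.map (fun i : Fin (k - 1) =>
        2 * (x i + (i : ℕ) + 1) + 1) Finset.univ.val).Nodup) ∧
    (∀ a ∈ (p ::ₘ Multiset.map (fun i : Fin (k - 1) =>
        2 * (x i + (i : ℕ) + 1) + 1) Finset.univ.val), Odd a) ∧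
    ¬ IsSquare ((p ::ₘ Multiset.map (fun i : Fin (k - 1) =>
        2 * (x i + (i : ℕ) + 1) + 1) Finset.univ.val).prod) ∧
    ((p ::ₘ Multiset.map (fun i : Fin (k - 1) =>
        2 * (x i + (i : ℕ) + 1) + 1) Finset.univ.val) =
      (p ::ₘ Multiset.map (fun i : Fin (k - 1) =>
        2 * (y i + (i : ℕ) + 1) + 1) Finset.univ.val) → x = y) := by
  set f : Fin (k-1) → ℕ := fun i => 2 * (x i + (i : ℕ) + 1) + 1 with hf
  set g : Fin (k-1) → ℕ := fun i => 2 * (y i + (i : ℕ) + 1) + 1 with hg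
  have hfs : StrictMono f := by
    intro i j hij
    have h1 : x i ≤ x j := hxmono hij.le
    have h2 : (i : ℕ) < j := hij
    simp only [hf]; omega
  have hgs : StrictMono g := by
    intro i j hij
    have h1 : y i ≤ y j := hymono hij.le
    have h2 : (i : ℕ) < j := hij
    simp only [hg]; omega
  refine ⟨?_, ?_, ?_, ?_, ?_, ?_⟩
  · simp [Multiset.card_map]; omega
  · have hsum : (Multiset.map f Finset.univ.val).sum = ∑ i, f i := rfl
    rw [Multiset.sum_cons, hsum]
    have hsplit : ∑ i, f i = 2 * (∑ i, x i) + 2 * (∑ i : Fin (k-1), (i : ℕ))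
        + 3 * (k - 1) := by
      have h2 : ∑ _i : Fin (k-1), 3 = 3 * (k - 1) := by
        simp [Finset.sum_const, mul_comm]
      rw [← h2, Finset.mul_sum, Finset.mul_sum, ← Finset.sum_add_distrib,
        ← Finset.sum_add_distrib]
      apply Finset.sum_congr rfl
      intro i _
      simp only [hf]; ring
    obtain ⟨j, rfl⟩ : ∃ j, k = j + 2 := ⟨k - 2, by omega⟩
    have h1 : ∑ i : Fin (j + 2 - 1), (i : ℕ) = (j + 1) * j / 2 := by
      rw [Fin.sum_univ_eq_sum_range (fun a => a) (j + 2 - 1), Finset.sum_range_id]; rfl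
    have h3 : 2 ∣ (j + 1) * j := by
      rcases Nat.even_or_odd (j + 1) with h | h
      · exact h.two_dvd.mul_right _
      · exact (Nat.Odd.sub_odd h odd_one).two_dvd.mul_left _
    have hk2 : (j + 2) ^ 2 + 2 = (j + 1) * j + 3 * (j + 2) := by ring
    rw [hsplit, hxsum, h1]
    omega
  · rw [Multiset.nodup_cons]
    constructor
    · intro hmem
      obtain ⟨i, _, hi⟩ := Multiset.mem_map.mp hmem
      exact hxne i hi
    · exact Multiset.Nodup.map hfs.injective Finset.univ.nodup
  · intro a ha
    rcases Multiset.mem_cons.mp ha with h | h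
    · exact h ▸ hpodd
    · obtain ⟨i, _, hi⟩ := Multiset.mem_map.mp h
      simp only [hf] at hi
      exact ⟨x i + i + 1, by omega⟩
  · rw [Multiset.prod_cons]
    have hQ : (Multiset.map f Finset.univ.val).prod = ∏ i, f i := rfl
    rw [hQ]
    intro ⟨t, ht⟩
    have hpprime : Prime p := hp.prime
    have hpt : p ∣ t := by
      have : p ∣ t * t := ⟨∏ i, f i, ht.symm⟩
      exact (hpprime.dvd_mul.mp this).elim id id
    obtain ⟨s, hs⟩ := hpt
    have : p * ∏ i, f i = p * (p * (s * s)) := by rw [ht, hs]; ring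
    have hprodd : ∏ i, f i = p * (s * s) := by
      exact Nat.eq_of_mul_eq_mul_left hp.pos this
    have : p ∣ ∏ i, f i := ⟨s * s, hprodd⟩
    obtain ⟨i, _, hi⟩ := hpprime.dvd_finset_prod_iff f |>.mp this
    exact hxdvd i hi
  · intro heq
    have hst : Multiset.map f Finset.univ.val = Multiset.map g Finset.univ.val :=
      (Multiset.cons_inj_right p).mp heq
    have hrange : Set.range f = Set.range g := by
      ext a
      constructor
      · rintro ⟨i, rfl⟩
        have : f i ∈ Multiset.map g Finset.univ.val := by
          rw [← hst]; exact Multiset.mem_map_of_mem f (Finset.mem_univ i)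
        obtain ⟨j, _, hj⟩ := Multiset.mem_map.mp this
        exact ⟨j, hj⟩
      · rintro ⟨i, rfl⟩
        have : g i ∈ Multiset.map f Finset.univ.val := by
          rw [hst]; exact Multiset.mem_map_of_mem g (Finset.mem_univ i)
        obtain ⟨j, _, hj⟩ := Multiset.mem_map.mp this
        exact ⟨j, hj⟩
    have hfg : f = g := by
      haveI : WellFoundedLT (Fin (k-1)) := Finite.to_wellFoundedLT
      exact (StrictMono.range_inj hfs hgs).mp hrange
    funext i
    have := congrFun hfg i
    simp only [hf, hg] at this
    omega
end
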